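/- Let 1 ≤ t_1 < t_2 < ... < t_k. If |t_i - t_j| ∈ {t_1,...,t_k} for every pair of distinct indices i,j, then t_i = i·t_1 for each i ∈ {1,...,k}. -/
import Mathlib


/-- If `t_1 < t_2 < … < t_k` are positive integers such that `|t_i - t_j|` is
always one of the `t`'s for distinct `i`, `j`, then `t_i = i · t_1` for each `i`. -/
theorem consecutive_of_closed_diff (k : ℕ) (hk : 0 < k) (t : Fin k → ℕ)
    (ht : StrictMono t) (hpos : ∀ a, 1 ≤ t a)
    (hclosed : ∀ i j : Fin k, i ≠ j → ∃ c : Fin k, ((t i : ℤ) - (t j : ℤ)).natAbs = t c) :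
    ∀ i : Fin k, t i = (i.val + 1) * t ⟨0, hk⟩ := by
  suffices h : ∀ n (hn : n < k), t ⟨n, hn⟩ = (n + 1) * t ⟨0, hk⟩ by
    intro i; exact h i.val i.isLt
  intro n
  induction n with
  | zero => intro hn; simp
  | succ n ih =>
    intro hn
    have hnk : n < k := Nat.lt_of_succ_lt hn
    obtain ⟨c, hc⟩ := hclosed ⟨n+1, hn⟩ ⟨0, hk⟩ (by simp [Fin.ext_iff])
    obtain ⟨d, hd⟩ := hclosed ⟨n+1, hn⟩ ⟨n, hnk⟩ (by simp [Fin.ext_iff])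
    have h01 : t ⟨0, hk⟩ < t ⟨n+1, hn⟩ := ht (by simp [Fin.lt_def])
    have hceq : t c + t ⟨0, hk⟩ = t ⟨n+1, hn⟩ := by omega
    have hclt : t c < t ⟨n+1, hn⟩ := by have := hpos ⟨0, hk⟩; omega
    have hcn : c.val ≤ n := by
      by_contra hcontra
      push_neg at hcontra
      have : t ⟨n+1, hn⟩ ≤ t c := ht.monotone (by simp [Fin.le_def]; omega)
      omega
    have hcle : t c ≤ t ⟨n, hnk⟩ := ht.monotone (by simp [Fin.le_def, hcn])
    have hd0 : t ⟨0, hk⟩ ≤ t d := ht.monotone (by simp [Fin.le_def])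
    have hmn : t ⟨n, hnk⟩ < t ⟨n+1, hn⟩ := ht (by simp [Fin.lt_def])
    have hi := ih hnk
    have key : t ⟨n+1, hn⟩ = t ⟨n, hnk⟩ + t ⟨0, hk⟩ := by omega
    rw [key, hi]; ring
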